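/- arXiv:0901.2008 — 2 statements merged into one kernel-verified Lean document; each statement's English description precedes it below -/
import Mathlib

section
/- For k ≤ n, the probability that the elements 1, 2, ..., k all lie in the same cycle of a uniformly random permutation of S_n is 1/k. Equivalently, the number of permutations w in S_n with 1,...,k in the same cycle is n!/k. -/
open Equiv Finset
noncomputable section
attribute [local instance] Classical.propDecidable

/-! For `s = {x | p x}` in a finite type `α`, the first-return map sends `w : Perm α` to the
permutation of `s` taking `x` to the first point of its forward `w`-orbit that is back in `s`.
Two points of `s` share a cycle of `w` iff they share a cycle of the induced permutation, and
inducing is equivariant for right multiplication by `Perm s`, so a uniform `w` induces a uniform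
permutation of `s`. The probability is therefore the proportion of full cycles in `S_k`, namely
`(k - 1)! / k! = 1 / k`. -/

theorem Finset.card_filter_mem_mul_card_eq_card_mul {G H : Type*} [Group G] [Group H] [Fintype G]
    [Fintype H] [DecidableEq H] (f : G → H) (φ : H →* G) (hf : ∀ g h, f (g * φ h) = f g * h)
    (C : Finset H) :
    #{g | f g ∈ C} * Fintype.card H = #C * Fintype.card G := by
  -- right multiplication by `φ a⁻¹` carries the fibre over `a` onto the fibre over `1`
  have fiber_card (a : H) : #{g | f g = a} = #{g | f g = 1} :=
    card_equiv (Equiv.mulRight (φ a⁻¹)) fun g => by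
      simp only [mem_filter, mem_univ, true_and, coe_mulRight, hf, mul_inv_eq_one]
  have hG : ∑ a, #{g | f g = a} = Fintype.card G := by
    rw [sum_card_fiberwise_eq_card_filter]; simp
  rw [← sum_card_fiberwise_eq_card_filter, ← hG]
  simp only [fiber_card, sum_const, smul_eq_mul, card_univ]
  ring

namespace Equiv.Perm

section FirstReturn

variable {α : Type*} [Finite α] {p : α → Prop} (w : Perm α) (x : Subtype p)

theorem exists_pos_pow_apply_mem : ∃ m, 0 < m ∧ p ((w ^ m) x) :=
  ⟨orderOf w, orderOf_pos w, by simp [pow_orderOf_eq_one, x.2]⟩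

def returnTime : ℕ := Nat.find (exists_pos_pow_apply_mem w x)

theorem returnTime_pos : 0 < returnTime w x :=
  (Nat.find_spec (exists_pos_pow_apply_mem w x)).1

theorem pow_returnTime_apply_mem : p ((w ^ returnTime w x) x) :=
  (Nat.find_spec (exists_pos_pow_apply_mem w x)).2

variable {w x}

theorem returnTime_le {m : ℕ} (hm : 0 < m) (hp : p ((w ^ m) x)) : returnTime w x ≤ m :=
  Nat.find_min' _ ⟨hm, hp⟩

theorem not_pow_apply_mem_of_lt_returnTime {m : ℕ} (hm : 0 < m) (hlt : m < returnTime w x) :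
    ¬ p ((w ^ m) x) :=
  fun hp => (returnTime_le hm hp).not_gt hlt

variable (w)

theorem injective_pow_returnTime_apply :
    Function.Injective fun x : Subtype p => (w ^ returnTime w x) (x : α) := by
  intro x y hxy
  wlog hle : returnTime w x ≤ returnTime w y generalizing x y
  · exact (this hxy.symm (le_of_not_ge hle)).symm
  rcases hle.lt_or_eq with hlt | heq
  · have hback : (w ^ (returnTime w y - returnTime w x)) (y : α) = x := by
      apply (w ^ returnTime w x).injective
      simp only at hxy
      rw [hxy, ← mul_apply, ← pow_add, Nat.add_sub_cancel' hle]
    exact absurd (hback ▸ x.2) (not_pow_apply_mem_of_lt_returnTime (Nat.sub_pos_of_lt hlt)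
      (Nat.sub_lt (returnTime_pos w y) (returnTime_pos w x)))
  · exact Subtype.ext ((w ^ returnTime w x).injective (by simpa only [heq] using hxy))

def firstReturn : Perm (Subtype p) :=
  Equiv.ofBijective (fun x => ⟨(w ^ returnTime w x) x, pow_returnTime_apply_mem w x⟩)
    (Finite.injective_iff_bijective.mp fun _ _ h =>
      injective_pow_returnTime_apply w (congrArg Subtype.val h))

theorem coe_firstReturn_apply : (firstReturn w x : α) = (w ^ returnTime w x) x := rfl

variable (x) in
theorem sameCycle_firstReturn_apply : w.SameCycle x (firstReturn w x) :=
  ⟨returnTime w x, by rw [zpow_natCast, coe_firstReturn_apply]⟩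

theorem sameCycle_firstReturn_iff {x y : Subtype p} :
    (firstReturn w).SameCycle x y ↔ w.SameCycle x y := by
  constructor
  · intro h
    obtain ⟨i, rfl⟩ := h.exists_nat_pow_eq
    clear h
    induction i with
    | zero => exact SameCycle.refl _ _
    | succ i ih =>
      rw [pow_succ', mul_apply]
      exact ih.trans (sameCycle_firstReturn_apply w _)
  · intro h
    obtain ⟨m, hm⟩ := h.exists_nat_pow_eq
    clear h
    induction m using Nat.strong_induction_on generalizing x with
    | _ m ih =>
      rcases Nat.eq_zero_or_pos m with rfl | hpos
      · exact Subtype.ext hm ▸ SameCycle.refl _ _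
      have hr : returnTime w x ≤ m := returnTime_le hpos (hm ▸ y.2)
      refine sameCycle_apply_left.mp
        (ih (m - returnTime w x) (Nat.sub_lt hpos (returnTime_pos w x)) ?_)
      rw [coe_firstReturn_apply, ← mul_apply, ← pow_add, Nat.sub_add_cancel hr, hm]

variable [DecidablePred p]

-- Before returning to `s`, the orbit of `g x` avoids `s`, where `ofSubtype g` acts trivially.
theorem pow_mul_ofSubtype_apply (g : Perm (Subtype p)) {m : ℕ} (hm : 0 < m)
    (hle : m ≤ returnTime w (g x)) :
    ((w * ofSubtype g) ^ m) (x : α) = (w ^ m) (g x : α) := by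
  induction m, hm using Nat.le_induction with
  | base => simp [ofSubtype_apply_of_mem g x.2]
  | succ m hm ih =>
    rw [pow_succ', mul_apply, ih (by omega), pow_succ', mul_apply, mul_apply,
      ofSubtype_apply_of_not_mem g (not_pow_apply_mem_of_lt_returnTime hm (by omega))]

theorem firstReturn_mul_ofSubtype (g : Perm (Subtype p)) :
    firstReturn (w * ofSubtype g) = firstReturn w * g := by
  ext x
  have hpos := returnTime_pos w (g x)
  have htime : returnTime (w * ofSubtype g) x = returnTime w (g x) := by
    refine le_antisymm (returnTime_le hpos ?_) (le_of_not_gt fun hlt => ?_)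
    · rw [pow_mul_ofSubtype_apply w g hpos le_rfl]
      exact pow_returnTime_apply_mem w (g x)
    · have := pow_returnTime_apply_mem (w * ofSubtype g) x
      rw [pow_mul_ofSubtype_apply w g (returnTime_pos _ x) hlt.le] at this
      exact not_pow_apply_mem_of_lt_returnTime (returnTime_pos _ x) hlt this
  rw [coe_firstReturn_apply, htime, pow_mul_ofSubtype_apply w g hpos le_rfl, mul_apply,
    coe_firstReturn_apply]

end FirstReturn

section FullCycles

variable {β : Type*} [Fintype β] [DecidableEq β]

theorem forall_sameCycle_iff_cycleType_eq [Nontrivial β] {σ : Perm β} (x : β) :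
    (∀ y, σ.SameCycle x y) ↔ σ.cycleType = {Fintype.card β} := by
  constructor
  · intro h
    have hx : σ x ≠ x := fun hx => by
      obtain ⟨y, hy⟩ := exists_ne x
      exact hy ((h y).eq_of_left hx).symm
    have hsupp : σ.support = univ := eq_univ_of_forall fun y => mem_support.mpr fun hy =>
      hx (by rw [(h y).eq_of_right hy]; exact hy)
    have hcyc : σ.IsCycle := ⟨x, hx, fun y _ => h y⟩
    rw [hcyc.cycleType, hsupp, card_univ]
  · intro h y
    have hcyc : σ.IsCycle := card_cycleType_eq_one.mp (by simp [h])
    have hsupp : σ.support = univ := eq_univ_of_card _ (by rw [← sum_cycleType, h]; simp)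
    exact hcyc.sameCycle (mem_support.mp (hsupp ▸ mem_univ x))
      (mem_support.mp (hsupp ▸ mem_univ y))

theorem card_forall_sameCycle_mul_card (x : β) :
    #{σ : Perm β | ∀ y, σ.SameCycle x y} * Fintype.card β = (Fintype.card β).factorial := by
  rcases subsingleton_or_nontrivial β with hβ | hβ
  · have hcard : Fintype.card β = 1 :=
      le_antisymm (Fintype.card_le_one_iff_subsingleton.mpr hβ) (Fintype.card_pos_iff.mpr ⟨x⟩)
    simp [hcard, Subsingleton.elim _ x, SameCycle.refl]
  · simp only [forall_sameCycle_iff_cycleType_eq x]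
    rw [card_of_cycleType_singleton Fintype.one_lt_card le_rfl, Nat.choose_self, mul_one,
      mul_comm, Nat.mul_factorial_pred Fintype.card_ne_zero]

end FullCycles

end Equiv.Perm

theorem prob_first_k_same_cycle (n k : ℕ) (hk : 1 ≤ k) (hkn : k ≤ n) :
    (Finset.univ.filter (fun w : Perm (Fin n) =>
        ∀ i : Fin n, (i : ℕ) < k → w.SameCycle ⟨0, by omega⟩ i)).card * k =
      n.factorial := by
  let x₀ : {i : Fin n // (i : ℕ) < k} := ⟨⟨0, by omega⟩, hk⟩
  let C : Finset (Perm {i : Fin n // (i : ℕ) < k}) := {σ | ∀ y, σ.SameCycle x₀ y}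
  have hfilter : (Finset.univ.filter (fun w : Perm (Fin n) =>
        ∀ i : Fin n, (i : ℕ) < k → w.SameCycle ⟨0, by omega⟩ i)) =
      ({w | Perm.firstReturn w ∈ C} : Finset _) := by
    ext w
    simp [C, Perm.sameCycle_firstReturn_iff, x₀]
  have hcard : Fintype.card {i : Fin n // (i : ℕ) < k} = k := Fintype.card_fin_lt_of_le hkn
  have hinduced := card_filter_mem_mul_card_eq_card_mul Perm.firstReturn Perm.ofSubtype
    (fun w g => Perm.firstReturn_mul_ofSubtype w g) C
  have hcycles := Perm.card_forall_sameCycle_mul_card x₀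
  rw [Fintype.card_perm, Fintype.card_perm, hcard, Fintype.card_fin] at hinduced
  rw [hcard] at hcycles
  rw [hfilter]
  apply Nat.eq_of_mul_eq_mul_right k.factorial_pos
  calc _ = #{w | Perm.firstReturn w ∈ C} * k.factorial * k := mul_right_comm ..
    _ = #C * k * n.factorial := by rw [hinduced, mul_right_comm]
    _ = n.factorial * k.factorial := by rw [hcycles, mul_comm]
end
end

section
/- Let g(t) be a complex polynomial of degree exactly d ≤ n−1 all of whose zeros lie on the unit circle |z| = 1, and suppose 1 is a zero of g of multiplicity m ≥ 0. Let E be the backward shift operator and P(q) = g(E)(q+n−1)_n where (a)_n is the falling factorial. Then P(q) = (q+n−d−1)_{n−d} · Q(q) where Q is a polynomial of degree d−m all of whose zeros have real part (d−n+1)/2. -/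
/-!
Over `ℂ` write `g = c ∏ (t - α)` over its roots, so that `g(E) = c ∏ (E - α)`, and apply the
factors one at a time. If `F = (q+K)_{K+1} p` with every root of `p` on `Re q = -K/2`, then
`(E - α) F = (q+K-1)_K S` with `S(q) = (q-1) p(q-1) - α (q+K) p(q)`. At a root `z` of `S`,
`|z-1| |p(z-1)| = |z+K| |p(z)|`. Left of the line `Re q = (1-K)/2` the point `z` is strictly
closer to `-K` than to `1`, and closer to each root `ρ` of `p` than to `ρ + 1`, so the right side
is strictly smaller; right of the line the inequalities reverse. Hence the roots of `S` lie on
that line. The degree of `S` is `deg p + 1`, except for `α = 1`, where the leading terms cancel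
and it is `deg p`.
-/

open Polynomial
noncomputable section

/-- `g(E)` applied to `f`, where `E` is the backward shift `(Ef)(q) = f(q-1)`. -/
def applyShift (g f : Polynomial ℂ) : Polynomial ℂ :=
  ∑ k ∈ Finset.range (g.natDegree + 1), C (g.coeff k) * f.comp (X - C (k : ℂ))

/-- The falling factorial `(q+m-1)_m = (q+m-1)(q+m-2)⋯q` as a polynomial in `q`. -/
def fallingPoly (m : ℕ) : Polynomial ℂ :=
  ∏ i ∈ Finset.range m, (X + C (i : ℂ))

namespace Polynomial

variable {R : Type*} [CommRing R] (r : R) (f : R[X])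

theorem pow_taylor (k : ℕ) : taylor r ^ k = taylor (k * r) := by
  induction k with
  | zero => simp [Module.End.one_eq_id]
  | succ k ih =>
    refine LinearMap.ext fun f => ?_
    rw [pow_succ', Module.End.mul_apply, ih, taylor_taylor]
    push_cast
    ring_nf

theorem coeff_taylor_natDegree_sub_one (hf : 0 < f.natDegree) :
    (taylor r f).coeff (f.natDegree - 1) =
      f.coeff (f.natDegree - 1) + f.natDegree * r * f.leadingCoeff := by
  obtain ⟨N, hN⟩ : ∃ N, f.natDegree = N + 1 := ⟨_, (Nat.succ_pred_eq_of_pos hf).symm⟩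
  have hle : (hasseDeriv N f).natDegree ≤ 1 := (natDegree_hasseDeriv_le f N).trans (by omega)
  rw [leadingCoeff, hN, Nat.add_sub_cancel, taylor_coeff, eq_X_add_C_of_natDegree_le_one hle]
  rw [eval_add, eval_mul, eval_C, eval_X, eval_C, hasseDeriv_coeff, hasseDeriv_coeff, zero_add,
    Nat.choose_self, add_comm 1 N, Nat.choose_succ_self_right]
  push_cast
  ring

variable [IsDomain R]

theorem degree_taylor_sub_C_mul {α : R} (hα : α ≠ 1) :
    (taylor r f - C α * f).degree = f.degree := by
  rcases eq_or_ne f 0 with rfl | hf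
  · simp
  have hcoeff : (taylor r f - C α * f).coeff f.natDegree = (1 - α) * f.leadingCoeff := by
    rw [coeff_sub, coeff_taylor_natDegree, coeff_C_mul, leadingCoeff]
    ring
  refine le_antisymm ((degree_sub_le _ _).trans (max_le (degree_taylor f r).le ?_)) ?_
  · exact degree_mul_le_of_le degree_C_le le_rfl |>.trans (by simp)
  · rw [degree_eq_natDegree hf]
    exact le_degree_of_ne_zero
      (hcoeff ▸ mul_ne_zero (sub_ne_zero.2 hα.symm) (leadingCoeff_ne_zero.2 hf))

theorem degree_taylor_sub_self [CharZero R] {r : R} (hr : r ≠ 0) (hf : 0 < f.natDegree) :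
    (taylor r f - f).degree = (f.natDegree - 1 : ℕ) := by
  have hcoeff : (taylor r f - f).coeff (f.natDegree - 1) = f.natDegree * r * f.leadingCoeff := by
    rw [coeff_sub, coeff_taylor_natDegree_sub_one r f hf]
    ring
  refine le_antisymm ((degree_le_iff_coeff_zero _ _).2 fun k hk => ?_) (le_degree_of_ne_zero ?_)
  · have hk' : f.natDegree - 1 < k := by exact_mod_cast hk
    rcases (show f.natDegree ≤ k by omega).eq_or_lt with rfl | hlt
    · rw [coeff_sub, coeff_taylor_natDegree, leadingCoeff, sub_self]
    · rw [coeff_sub, coeff_eq_zero_of_natDegree_lt hlt,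
        coeff_eq_zero_of_natDegree_lt ((natDegree_taylor f r).trans_lt hlt), sub_self]
  · rw [hcoeff]
    exact mul_ne_zero (mul_ne_zero (by exact_mod_cast hf.ne') hr)
      (leadingCoeff_ne_zero.2 (ne_zero_of_natDegree_gt hf))

theorem Splits.norm_eval_le_norm_eval {K : Type*} [NormedField K] {p : K[X]}
    (hp : p.Splits) {z w : K} (h : ∀ ρ ∈ p.roots, ‖z - ρ‖ ≤ ‖w - ρ‖) :
    ‖p.eval z‖ ≤ ‖p.eval w‖ := by
  have hnorm (x : K) : ‖(p.roots.map (x - ·)).prod‖ = (p.roots.map (‖x - ·‖)).prod := by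
    rw [← normHom_apply, map_multiset_prod, Multiset.map_map]
    rfl
  rw [hp.eval_eq_prod_roots, hp.eval_eq_prod_roots, norm_mul, norm_mul, hnorm, hnorm]
  gcongr
  exact Multiset.prod_map_le_prod_map₀ _ _ (fun _ _ => norm_nonneg _) h

end Polynomial

theorem Complex.norm_sub_lt_norm_sub_iff {a b z : ℂ} (him : a.im = b.im) :
    ‖z - a‖ < ‖z - b‖ ↔ (b.re - a.re) * (2 * z.re - a.re - b.re) < 0 := by
  rw [← sq_lt_sq₀ (norm_nonneg _) (norm_nonneg _), Complex.sq_norm, Complex.sq_norm,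
    Complex.normSq_apply, Complex.normSq_apply]
  simp only [Complex.sub_re, Complex.sub_im, him]
  constructor <;> intro h <;> nlinarith

theorem monic_fallingPoly (K : ℕ) : (fallingPoly K).Monic :=
  monic_prod_of_monic _ _ fun _ _ => monic_X_add_C _

theorem natDegree_fallingPoly (K : ℕ) : (fallingPoly K).natDegree = K := by
  rw [fallingPoly, natDegree_prod_of_monic _ _ fun _ _ => monic_X_add_C _]
  simp only [natDegree_X_add_C, Finset.sum_const, Finset.card_range, smul_eq_mul, mul_one]

theorem fallingPoly_succ (K : ℕ) : fallingPoly (K + 1) = fallingPoly K * (X + C (K : ℂ)) :=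
  Finset.prod_range_succ _ K

theorem taylor_neg_one_fallingPoly_succ (K : ℕ) :
    taylor (-1) (fallingPoly (K + 1)) = (X - 1) * fallingPoly K := by
  rw [fallingPoly, taylor_apply, prod_comp, Finset.prod_range_succ', fallingPoly, mul_comm]
  simp [sub_eq_add_neg, add_assoc]

def shiftCofactor (K : ℕ) (α : ℂ) (p : ℂ[X]) : ℂ[X] :=
  (X - 1) * taylor (-1) p - C α * ((X + C (K : ℂ)) * p)

theorem taylor_neg_one_sub_C_mul_fallingPoly_mul (K : ℕ) (α : ℂ) (p : ℂ[X]) :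
    taylor (-1) (fallingPoly (K + 1) * p) - C α * (fallingPoly (K + 1) * p) =
      fallingPoly K * shiftCofactor K α p := by
  rw [taylor_mul, taylor_neg_one_fallingPoly_succ, fallingPoly_succ, shiftCofactor]
  ring

theorem eval_shiftCofactor (K : ℕ) (α : ℂ) (p : ℂ[X]) (z : ℂ) :
    (shiftCofactor K α p).eval z = (z - 1) * p.eval (z - 1) - α * ((z + K) * p.eval z) := by
  simp [shiftCofactor, taylor_eval, sub_eq_add_neg]

theorem degree_shiftCofactor (K : ℕ) (α : ℂ) {p : ℂ[X]} (hp : p ≠ 0) :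
    (shiftCofactor K α p).degree = (p.natDegree + if α = 1 then 0 else 1 : ℕ) := by
  have hF : (fallingPoly (K + 1) * p).natDegree = K + 1 + p.natDegree := by
    rw [natDegree_mul (monic_fallingPoly _).ne_zero hp, natDegree_fallingPoly]
  have key : (fallingPoly K * shiftCofactor K α p).degree =
      (K + (p.natDegree + if α = 1 then 0 else 1) : ℕ) := by
    rw [← taylor_neg_one_sub_C_mul_fallingPoly_mul]
    split_ifs with hα
    · rw [hα, C_1, one_mul, degree_taylor_sub_self _ (by norm_num) (by omega), hF]
      congr 1
      omega
    · rw [degree_taylor_sub_C_mul _ _ hα,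
        degree_eq_natDegree (mul_ne_zero (monic_fallingPoly _).ne_zero hp), hF]
      congr 1
      omega
  rw [degree_mul, degree_eq_natDegree (monic_fallingPoly K).ne_zero, natDegree_fallingPoly,
    Nat.cast_add] at key
  exact WithBot.add_left_cancel (WithBot.natCast_ne_bot K) key

theorem re_eq_of_isRoot_shiftCofactor {K : ℕ} {α : ℂ} {p : ℂ[X]} (hα : ‖α‖ = 1)
    (hroots : ∀ z, p.IsRoot z → z.re = -K / 2) {z : ℂ} (hz : (shiftCofactor K α p).IsRoot z) :
    z.re = (1 - K) / 2 := by
  have hnorm : ‖z + K‖ * ‖p.eval z‖ = ‖z - 1‖ * ‖p.eval (z - 1)‖ := by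
    have h := congrArg norm (sub_eq_zero.1 ((eval_shiftCofactor K α p z).symm.trans hz))
    rw [norm_mul, norm_mul α, hα, one_mul, norm_mul] at h
    exact h.symm
  have hroot_mem {ρ : ℂ} (hρ : ρ ∈ p.roots) : ρ.re = -K / 2 := hroots ρ (isRoot_of_mem_roots hρ)
  have hsplit := IsAlgClosed.splits p
  rcases lt_trichotomy z.re ((1 - K) / 2) with h | h | h
  · have hlin : ‖z - (-K)‖ < ‖z - 1‖ := by
      refine (Complex.norm_sub_lt_norm_sub_iff (by simp)).2 ?_
      simp only [Complex.one_re, Complex.neg_re, Complex.natCast_re]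
      nlinarith
    have hle : ‖p.eval z‖ ≤ ‖p.eval (z - 1)‖ := hsplit.norm_eval_le_norm_eval fun ρ hρ => by
      rw [sub_sub, add_comm 1 ρ]
      refine ((Complex.norm_sub_lt_norm_sub_iff (by simp)).2 ?_).le
      simp only [Complex.add_re, Complex.one_re, hroot_mem hρ]
      linarith
    have hpos : 0 < ‖p.eval (z - 1)‖ := norm_pos_iff.2 fun h0 => by
      have := hroots _ h0
      rw [Complex.sub_re, Complex.one_re] at this
      linarith
    rw [sub_neg_eq_add] at hlin
    exact absurd hnorm (mul_lt_mul_of_nonneg_of_pos hlin hle (norm_nonneg _) hpos).ne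
  · exact h
  · have hlin : ‖z - 1‖ < ‖z - (-K)‖ := by
      refine (Complex.norm_sub_lt_norm_sub_iff (by simp)).2 ?_
      simp only [Complex.one_re, Complex.neg_re, Complex.natCast_re]
      nlinarith
    have hle : ‖p.eval (z - 1)‖ ≤ ‖p.eval z‖ := hsplit.norm_eval_le_norm_eval fun ρ hρ => by
      rw [sub_sub, add_comm 1 ρ]
      refine ((Complex.norm_sub_lt_norm_sub_iff (by simp)).2 ?_).le
      simp only [Complex.add_re, Complex.one_re, hroot_mem hρ]
      linarith
    have hpos : 0 < ‖p.eval z‖ := norm_pos_iff.2 fun h0 => by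
      have := hroots _ h0
      linarith
    rw [sub_neg_eq_add] at hlin
    exact absurd hnorm (mul_lt_mul_of_nonneg_of_pos hlin hle (norm_nonneg _) hpos).ne'

theorem applyShift_eq_aeval (g f : ℂ[X]) : applyShift g f = aeval (taylor (-1)) g f := by
  rw [aeval_eq_sum_range, LinearMap.coe_sum, Finset.sum_apply]
  refine Finset.sum_congr rfl fun k _ => ?_
  rw [LinearMap.smul_apply, pow_taylor, taylor_apply, smul_eq_C_mul]
  simp [sub_eq_add_neg]

theorem exists_aeval_prod_fallingPoly_eq (K : ℕ) (s : Multiset ℂ) (hs : ∀ α ∈ s, ‖α‖ = 1) :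
    ∃ p : ℂ[X], aeval (taylor (-1)) (s.map (X - C ·)).prod (fallingPoly (K + s.card + 1)) =
        fallingPoly (K + 1) * p ∧ p ≠ 0 ∧ p.natDegree = s.card - s.count 1 ∧
      ∀ z, p.IsRoot z → z.re = -K / 2 := by
  induction s using Multiset.induction_on generalizing K with
  | empty => exact ⟨1, by simp, one_ne_zero, by simp, fun z hz => by simp at hz⟩
  | cons a s ih =>
    obtain ⟨p, hp, hp0, hpdeg, hpre⟩ :=
      ih (K + 1) fun α hα => hs α (Multiset.mem_cons_of_mem hα)
    have hdeg := degree_shiftCofactor (K + 1) a hp0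
    refine ⟨shiftCofactor (K + 1) a p, ?_, ne_zero_of_coe_le_degree hdeg.ge, ?_, fun z hz => ?_⟩
    · rw [Multiset.map_cons, Multiset.prod_cons, map_mul, Module.End.mul_apply, Multiset.card_cons,
        show K + (s.card + 1) + 1 = K + 1 + s.card + 1 by ring, hp, map_sub, aeval_X, aeval_C,
        LinearMap.sub_apply, Module.algebraMap_end_apply, smul_eq_C_mul,
        taylor_neg_one_sub_C_mul_fallingPoly_mul]
    · rw [natDegree_eq_of_degree_eq_some hdeg, hpdeg, Multiset.card_cons, Multiset.count_cons]
      have := s.count_le_card 1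
      by_cases ha : a = 1
      · simp only [ha, if_true]
        omega
      · simp only [ha, Ne.symm ha, if_false]
        omega
    · rw [re_eq_of_isRoot_shiftCofactor (hs a (Multiset.mem_cons_self a s)) hpre hz]
      push_cast
      ring

theorem shift_falling_roots_low (n d m : ℕ) (g : Polynomial ℂ)
    (hdeg : g.degree = d) (hd : d < n)
    (hcirc : ∀ z : ℂ, g.IsRoot z → ‖z‖ = 1)
    (hm : g.rootMultiplicity 1 = m) :
    ∃ Q : Polynomial ℂ,
      applyShift g (fallingPoly n) = (∏ i ∈ Finset.range (n - d), (X + C (i : ℂ))) * Q ∧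
      Q.natDegree = d - m ∧
      ∀ z : ℂ, Q.IsRoot z → z.re = ((d : ℝ) - n + 1) / 2 := by
  obtain ⟨K, rfl⟩ : ∃ K, n = K + d + 1 := ⟨n - d - 1, by omega⟩
  have hcard : g.roots.card = d := by
    rw [IsAlgClosed.card_roots_eq_natDegree, natDegree_eq_of_degree_eq_some hdeg]
  obtain ⟨p, hp, -, hpdeg, hpre⟩ := exists_aeval_prod_fallingPoly_eq K g.roots
    fun α hα => hcirc α (isRoot_of_mem_roots hα)
  have hlc : g.leadingCoeff ≠ 0 := leadingCoeff_ne_zero.2 (ne_zero_of_coe_le_degree hdeg.ge)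
  refine ⟨C g.leadingCoeff * p, ?_, ?_, fun z hz => ?_⟩
  · rw [hcard] at hp
    rw [applyShift_eq_aeval]
    conv_lhs => rw [(IsAlgClosed.splits g).eq_prod_roots]
    rw [map_mul, Module.End.mul_apply, aeval_C, Module.algebraMap_end_apply, hp,
      show K + d + 1 - d = K + 1 by omega, smul_eq_C_mul, fallingPoly]
    ring
  · rw [natDegree_C_mul hlc, hpdeg, hcard, count_roots, hm]
  · rw [IsRoot, eval_mul, eval_C, mul_eq_zero] at hz
    rw [hpre z (hz.resolve_left hlc)]
    push_cast
    ring
end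
end
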